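/- arXiv:math/9512211 — 4 statements merged into one kernel-verified Lean document; each statement's English description precedes it below -/
import Mathlib

section
/- For any square-summable sequences $(a_n)$ and $(b_n)$ of complex numbers and any complex $s$ with $\mathrm{Re}(s) > 1/2$, the Dirichlet convolution series $\sum_{n=1}^\infty c_n n^{-s}$ with $c_n = \sum_{kl = n} a_k b_l$ converges absolutely. -/
open LSeries.notation

lemma aux_lsum (a : ℕ → ℂ) (ha : Summable fun n : ℕ => ‖a n‖ ^ 2) {σ : ℝ}
    (hσ : 1 / 2 < σ) : LSeriesSummable (fun n => (‖a n‖ : ℂ)) (σ : ℂ) := by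
  apply Summable.of_norm
  have hsum : Summable fun n : ℕ => (‖a n‖ ^ 2 + (n : ℝ) ^ (-(2 * σ))) / 2 := by
    apply Summable.div_const
    exact ha.add (Real.summable_nat_rpow.mpr (by linarith))
  apply hsum.of_nonneg_of_le (fun n => norm_nonneg _)
  intro n
  rw [LSeries.norm_term_eq]
  rcases eq_or_ne n 0 with rfl | hn
  · simp only [if_pos rfl]
    positivity
  · rw [if_neg hn, Complex.ofReal_re, Complex.norm_real, Real.norm_eq_abs, abs_norm]
    have hn' : (0 : ℝ) < n := by positivity
    have h1 : (n : ℝ) ^ (-(2 * σ)) = ((n : ℝ) ^ σ)⁻¹ ^ 2 := by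
      rw [← Real.rpow_neg_one ((n:ℝ) ^ σ), ← Real.rpow_natCast, ← Real.rpow_mul hn'.le,
        ← Real.rpow_mul hn'.le]
      norm_num
      ring_nf
    rw [h1, div_eq_mul_inv]
    have h2 := two_mul_le_add_sq ‖a n‖ ((n : ℝ) ^ σ)⁻¹
    nlinarith [norm_nonneg (a n), inv_nonneg.mpr (Real.rpow_nonneg hn'.le σ)]

/-- For square-summable `(a n)` and `(b n)` and `Re s > 1/2`, the Dirichlet
convolution series `∑ c n * n ^ (-s)`, `c n = ∑_{kl = n} a k * b l`, converges
absolutely. -/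
theorem stmt2 (a b : ℕ → ℂ) (ha : Summable fun n : ℕ => ‖a n‖ ^ 2)
    (hb : Summable fun n : ℕ => ‖b n‖ ^ 2) (s : ℂ) (hs : 1 / 2 < s.re) :
    Summable fun n : ℕ =>
      ‖(∑ d ∈ (n + 1).divisors, a d * b ((n + 1) / d)) * ((n + 1 : ℕ) : ℂ) ^ (-s)‖ := by
  obtain ⟨σ, hσdef, hσ⟩ : ∃ σ : ℝ, σ = s.re ∧ 1 / 2 < σ := ⟨s.re, rfl, hs⟩
  set A : ℕ → ℂ := fun n => (‖a n‖ : ℂ) with hA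
  set B : ℕ → ℂ := fun n => (‖b n‖ : ℂ) with hB
  have hAB : LSeriesSummable (A ⍟ B) (σ : ℂ) :=
    (aux_lsum a ha hσ).convolution (aux_lsum b hb hσ)
  -- the terms of the convolution L-series are nonneg reals
  have hre : Summable fun n : ℕ => (LSeries.term (A ⍟ B) (σ : ℂ) n).re :=
    hAB.map Complex.reCLM Complex.reCLM.continuous
  have hre' : Summable fun n : ℕ => (LSeries.term (A ⍟ B) (σ : ℂ) (n + 1)).re :=
    hre.comp_injective (add_left_injective 1)
  refine Summable.of_nonneg_of_le (fun n => norm_nonneg _) (fun n => ?_) hre'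
  have hn : (n + 1 : ℕ) ≠ 0 := Nat.succ_ne_zero n
  have hn' : (0 : ℝ) < ((n + 1 : ℕ) : ℝ) := by positivity
  rw [LSeries.term_of_ne_zero hn, LSeries.convolution_def]
  beta_reduce
  rw [Nat.sum_divisorsAntidiagonal (f := fun k l => A k * B l)]
  have hAB1 : (∑ d ∈ (n + 1).divisors, A d * B ((n + 1) / d))
      = ((∑ d ∈ (n + 1).divisors, ‖a d‖ * ‖b ((n + 1) / d)‖ : ℝ) : ℂ) := by
    push_cast [hA, hB]
    rfl
  have hpow : ((n + 1 : ℕ) : ℂ) ^ (σ : ℂ) = ((((n + 1 : ℕ) : ℝ) ^ σ : ℝ) : ℂ) := by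
    rw [← Complex.ofReal_natCast, Complex.ofReal_cpow hn'.le, Complex.ofReal_natCast]
  rw [hAB1, hpow, ← Complex.ofReal_div, Complex.ofReal_re]
  have hnorm : ‖((n + 1 : ℕ) : ℂ) ^ (-s)‖ = ((n + 1 : ℕ) : ℝ) ^ (-σ) := by
    rw [Complex.norm_natCast_cpow_of_pos (Nat.succ_pos n), Complex.neg_re, hσdef]
  rw [norm_mul, hnorm, Real.rpow_neg hn'.le, ← div_eq_mul_inv]
  gcongr
  calc ‖∑ d ∈ (n + 1).divisors, a d * b ((n + 1) / d)‖
      ≤ ∑ d ∈ (n + 1).divisors, ‖a d * b ((n + 1) / d)‖ := norm_sum_le _ _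
    _ = ∑ d ∈ (n + 1).divisors, ‖a d‖ * ‖b ((n + 1) / d)‖ := by
        simp [norm_mul]
end

section
/- Let $(a_n)_{n\ge 1}$ be a sequence of complex numbers with $a_1 = 1$ and $\sum_{n=2}^\infty |a_n| \le 1$ (with $a_n = 0$ only allowed as values, i.e., no further restriction). Define $(b_n)$ as the Dirichlet-convolution inverse of $(a_n)$, i.e., $b_1 = 1$ and $\sum_{d\mid n} b_d a_{n/d} = 0$ for $n > 1$. Then for every real $\sigma_0 > 0$ such that $\sum_{n \ge 2} |a_n| n^{-\sigma_0} \le 1$, the series $\sum_{n=1}^\infty |b_n| n^{-\sigma_0}$ converges. -/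
/-!
Weight by `n ^ (-σ₀)`: put `g n = ‖b n‖ n^{-σ₀}` and `f n = ‖a n‖ n^{-σ₀}` for `n ≥ 2`, `f 1 = 0`.
Since `n^{-σ₀} < 1` for `n ≥ 2`, `α := ∑ f` is strictly smaller than `∑_{n ≥ 2} ‖a n‖ ≤ 1`
(or `α = 0`). Writing `a = 1 + (a - 1)` in the ring of arithmetic functions, `b * a = 1` away
from `1` gives `b n = -(b * (a - 1)) n`, hence `g n ≤ (g * f) n` for `n ≥ 2`. Summing over
`n ≤ N` and enlarging the hyperbola `d m ≤ N` to the square `d, m ≤ N` gives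
`S_N ≤ g 1 + α S_N`, so the partial sums `S_N` of `g` stay below `g 1 / (1 - α)`.
-/

open Finset LSeries
open scoped LSeries.notation

lemma toArithmeticFunction_apply_of_ne_zero {R : Type*} [Zero R] (f : ℕ → R) {n : ℕ}
    (hn : n ≠ 0) : toArithmeticFunction f n = f n := by
  simp [toArithmeticFunction, hn]

namespace LSeries

lemma convolution_apply_eq_sum_divisors {R : Type*} [Semiring R] (f g : ℕ → R) (n : ℕ) :
    (f ⍟ g) n = ∑ d ∈ n.divisors, f d * g (n / d) := by
  rw [convolution_def]
  exact Nat.sum_divisorsAntidiagonal fun x y ↦ f x * g y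

lemma term_convolution_eq (f g : ℕ → ℂ) (s : ℂ) : term (f ⍟ g) s = term f s ⍟ term g s := by
  ext n
  rw [term_convolution, convolution_def]

lemma norm_term_ofReal (f : ℕ → ℂ) (σ : ℝ) {n : ℕ} (hn : n ≠ 0) :
    ‖term f σ n‖ = ‖f n‖ * (n : ℝ) ^ (-σ) := by
  rw [norm_term_eq, if_neg hn, Complex.ofReal_re, Real.rpow_neg n.cast_nonneg, div_eq_mul_inv]

end LSeries

namespace ArithmeticFunction

lemma sub_apply {R : Type*} [CommRing R] (f g : ArithmeticFunction R) (n : ℕ) :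
    (f - g) n = f n - g n := by
  rw [sub_eq_add_neg, add_apply, neg_apply, ← sub_eq_add_neg]

lemma norm_mul_apply_le {R : Type*} [SeminormedRing R] (f g : ArithmeticFunction R) (n : ℕ) :
    ‖(f * g) n‖ ≤ ((‖f ·‖) ⍟ (‖g ·‖)) n := by
  rw [mul_apply, convolution_def]
  exact (norm_sum_le _ _).trans (sum_le_sum fun p _ ↦ norm_mul_le _ _)

lemma norm_apply_le_of_mul_apply_eq_zero {R : Type*} [SeminormedCommRing R]
    {f g : ArithmeticFunction R} {n : ℕ} (h : (f * g) n = 0) :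
    ‖f n‖ ≤ ((‖f ·‖) ⍟ (‖(g - 1) ·‖)) n := by
  have hrec : (f * (g - 1)) n = -f n := by
    rw [mul_sub, mul_one, sub_apply, h, zero_sub]
  calc ‖f n‖ = ‖(f * (g - 1)) n‖ := by rw [hrec, norm_neg]
    _ ≤ _ := norm_mul_apply_le _ _ n

end ArithmeticFunction

lemma sum_Ioc_convolution_le {g f : ℕ → ℝ} {α : ℝ} (hg : ∀ n, 0 ≤ g n)
    (hf : ∀ N, ∑ n ∈ Ioc 0 N, f n ≤ α) (N : ℕ) :
    ∑ n ∈ Ioc 0 N, (g ⍟ f) n ≤ (∑ n ∈ Ioc 0 N, g n) * α := by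
  have hAF {h : ℕ → ℝ} {M n : ℕ} (hn : n ∈ Ioc 0 M) : toArithmeticFunction h n = h n :=
    toArithmeticFunction_apply_of_ne_zero h (mem_Ioc.mp hn).1.ne'
  change ∑ n ∈ Ioc 0 N, (toArithmeticFunction g * toArithmeticFunction f) n ≤ _
  rw [ArithmeticFunction.sum_Ioc_mul_eq_sum_sum, sum_mul]
  refine sum_le_sum fun n hn ↦ ?_
  rw [hAF hn, sum_congr rfl fun m ↦ hAF]
  exact mul_le_mul_of_nonneg_left (hf _) (hg n)

lemma sum_Ioc_le_of_le_convolution {g f : ℕ → ℝ} {α : ℝ} (hg : ∀ n, 0 ≤ g n)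
    (hf_nonneg : ∀ n, 0 ≤ f n) (hf : ∀ N, ∑ n ∈ Ioc 0 N, f n ≤ α) (hα : α < 1)
    (hrec : ∀ n, 1 < n → g n ≤ (g ⍟ f) n) (N : ℕ) :
    ∑ n ∈ Ioc 0 N, g n ≤ g 1 / (1 - α) := by
  have hpoint : ∀ n ∈ Ioc 0 N, g n ≤ (if n = 1 then g 1 else 0) + (g ⍟ f) n := by
    intro n hn
    rcases Nat.lt_or_eq_of_le (mem_Ioc.mp hn).1 with h1 | rfl
    · rw [if_neg h1.ne', zero_add]
      exact hrec n h1
    · simpa [convolution_def] using mul_nonneg (hg 1) (hf_nonneg 1)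
  have hS : ∑ n ∈ Ioc 0 N, g n ≤ g 1 + (∑ n ∈ Ioc 0 N, g n) * α :=
    calc ∑ n ∈ Ioc 0 N, g n ≤ ∑ n ∈ Ioc 0 N, ((if n = 1 then g 1 else 0) + (g ⍟ f) n) :=
          sum_le_sum hpoint
      _ ≤ g 1 + (∑ n ∈ Ioc 0 N, g n) * α := by
          rw [sum_add_distrib, sum_ite_eq']
          gcongr
          · split_ifs <;> simp [hg 1]
          · exact sum_Ioc_convolution_le hg hf N
  rw [le_div_iff₀ (by linarith)]
  linarith

lemma summable_of_sum_Ioc_le {g : ℕ → ℝ} {c : ℝ} (hg : ∀ n, 0 ≤ g n)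
    (h : ∀ N, ∑ n ∈ Ioc 0 N, g n ≤ c) : Summable fun n ↦ g (n + 1) := by
  refine summable_of_sum_range_le (c := c) (fun n ↦ hg _) fun N ↦ ?_
  rw [range_eq_Ico, sum_Ico_add', Ico_add_one_add_one_eq_Ioc]
  exact h N

lemma sum_Ioc_le_tsum_nat_add_two {f : ℕ → ℝ} (hf : ∀ n, 0 ≤ f n) (hf0 : f 0 = 0)
    (hf1 : f 1 = 0) (hs : Summable fun n ↦ f (n + 2)) (N : ℕ) :
    ∑ n ∈ Ioc 0 N, f n ≤ ∑' n, f (n + 2) := by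
  have hsum := ((summable_nat_add_iff 2).mp hs).sum_add_tsum_nat_add 2
  simp only [sum_range_succ, sum_range_zero, hf0, hf1, zero_add] at hsum
  exact (((summable_nat_add_iff 2).mp hs).sum_le_tsum _ fun n _ ↦ hf n).trans_eq hsum.symm

lemma sum_Ioc_norm_term_sub_one_le {a : ℕ → ℂ} (ha1 : a 1 = 1) {σ : ℝ}
    (hs : Summable fun n : ℕ ↦ ‖a (n + 2)‖ * ((n + 2 : ℝ)) ^ (-σ)) (N : ℕ) :
    ∑ n ∈ Ioc 0 N, ‖(toArithmeticFunction (term a σ) - 1) n‖ ≤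
      ∑' n : ℕ, ‖a (n + 2)‖ * ((n + 2 : ℝ)) ^ (-σ) := by
  have h2 (n : ℕ) : ‖(toArithmeticFunction (term a σ) - 1) (n + 2)‖ =
      ‖a (n + 2)‖ * ((n + 2 : ℝ)) ^ (-σ) := by
    rw [ArithmeticFunction.sub_apply, ArithmeticFunction.one_apply_ne (by omega), sub_zero,
      toArithmeticFunction_apply_of_ne_zero _ (by omega), norm_term_ofReal _ _ (by omega)]
    push_cast
    rfl
  simp_rw [← h2]
  refine sum_Ioc_le_tsum_nat_add_two (fun n ↦ norm_nonneg _) (by simp) ?_ (by simpa only [h2]) N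
  simp [ArithmeticFunction.sub_apply, toArithmeticFunction_apply_of_ne_zero, term_of_ne_zero, ha1]

lemma tsum_mul_lt_one {ι : Type*} {c w : ι → ℝ} (hc : ∀ i, 0 ≤ c i) (hw : ∀ i, w i < 1)
    (hcs : Summable c) (hcws : Summable fun i ↦ c i * w i) (h : ∑' i, c i ≤ 1) :
    ∑' i, c i * w i < 1 := by
  by_cases h0 : ∀ i, c i = 0
  · simp [h0]
  push Not at h0
  obtain ⟨i, hi⟩ := h0
  have hci : 0 < c i := (hc i).lt_of_ne' hi
  calc ∑' j, c j * w j < ∑' j, c j :=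
        hcws.tsum_lt_tsum (fun j ↦ by nlinarith [hc j, hw j]) (by nlinarith [hw i]) hcs
    _ ≤ 1 := h

theorem stmt10_general (a b : ℕ → ℂ) (ha1 : a 1 = 1)
    (hasum : Summable fun n : ℕ => ‖a (n + 2)‖)
    (hale : (∑' n : ℕ, ‖a (n + 2)‖) ≤ 1)
    (hbinv : ∀ n : ℕ, 1 < n → (∑ d ∈ n.divisors, b d * a (n / d)) = 0)
    (σ₀ : ℝ) (hσ₀ : 0 < σ₀)
    (hσ₀sum : Summable fun n : ℕ => ‖a (n + 2)‖ * ((n + 2 : ℝ)) ^ (-σ₀)) :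
    Summable fun n : ℕ => ‖b (n + 1)‖ * ((n + 1 : ℝ)) ^ (-σ₀) := by
  set A := toArithmeticFunction (term a σ₀)
  set B := toArithmeticFunction (term b σ₀)
  have hα := tsum_mul_lt_one (fun n ↦ norm_nonneg (a (n + 2)))
    (fun n ↦ Real.rpow_lt_one_of_one_lt_of_neg (by linarith [n.cast_nonneg (α := ℝ)])
      (neg_lt_zero.mpr hσ₀)) hasum hσ₀sum hale
  have hBA (n : ℕ) (hn : 1 < n) : (B * A) n = 0 := by
    change (term b σ₀ ⍟ term a σ₀) n = 0
    rw [← term_convolution_eq, term_of_ne_zero (by omega), convolution_apply_eq_sum_divisors,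
      hbinv n hn, zero_div]
  have hbound := sum_Ioc_le_of_le_convolution (g := (‖B ·‖)) (fun n ↦ norm_nonneg _)
    (fun n ↦ norm_nonneg _) (sum_Ioc_norm_term_sub_one_le ha1 hσ₀sum) hα
    fun n hn ↦ ArithmeticFunction.norm_apply_le_of_mul_apply_eq_zero (hBA n hn)
  refine (summable_of_sum_Ioc_le (fun n ↦ norm_nonneg _) hbound).congr fun n ↦ ?_
  rw [toArithmeticFunction_apply_of_ne_zero _ n.succ_ne_zero, norm_term_ofReal _ _ n.succ_ne_zero]
  push_cast
  rfl

/-- If `a 1 = 1`, `∑_{n ≥ 2} ‖a n‖ ≤ 1`, and `(b n)` is the Dirichlet-convolution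
inverse of `(a n)`, then `∑ ‖b n‖ n^{-σ₀}` converges for every `σ₀ > 0` with
`∑_{n ≥ 2} ‖a n‖ n^{-σ₀} ≤ 1`. -/
theorem stmt10 (a b : ℕ → ℂ) (ha1 : a 1 = 1)
    (hasum : Summable fun n : ℕ => ‖a (n + 2)‖)
    (hale : (∑' n : ℕ, ‖a (n + 2)‖) ≤ 1)
    (hb1 : b 1 = 1)
    (hbinv : ∀ n : ℕ, 1 < n → (∑ d ∈ n.divisors, b d * a (n / d)) = 0)
    (σ₀ : ℝ) (hσ₀ : 0 < σ₀)
    (hσ₀sum : Summable fun n : ℕ => ‖a (n + 2)‖ * ((n + 2 : ℝ)) ^ (-σ₀))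
    (hσ₀le : (∑' n : ℕ, ‖a (n + 2)‖ * ((n + 2 : ℝ)) ^ (-σ₀)) ≤ 1) :
    Summable fun n : ℕ => ‖b (n + 1)‖ * ((n + 1 : ℝ)) ^ (-σ₀) :=
  stmt10_general a b ha1 hasum hale hbinv σ₀ hσ₀ hσ₀sum
end

section
/- Let $(a_n)$ be a sequence with $a_1 = 1$ and $\sum_m |a_m|^2 < \infty$, and let $(b_n)$ be its Dirichlet-convolution inverse. In the Hilbert space $L^2(0,1)$ with orthonormal basis $e_n(x) = \sqrt{2}\sin(n\pi x)$, let $\varphi = \sum_{m} a_m e_m$, extended oddly and 2-periodically, and define $\varphi_n(x) = \varphi(nx) = \sum_m a_m e_{mn}(x)$ and $\psi_k = \sum_{d \mid k} \overline{b_{k/d}}\, e_d$. Then $\langle \varphi_j, \psi_k \rangle_{L^2(0,1)} = \delta_{jk}$ for all positive integers $j, k$. -/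
/-- Biorthogonality of the dilation system and its dual system. Here `H` is a
complex Hilbert space (modelling `L²(0,1)`) with orthonormal system `e`
(modelling `e n = √2 sin(n π x)`, indexed by `n ≥ 1`); `(b n)` is the
Dirichlet-convolution inverse of `(a n)`; `φ j = ∑_m a m • e (m j)` is the
`j`-th dilate of `φ = ∑_m a m • e m`, and `ψ k = ∑_{d ∣ k} conj (b (k/d)) • e d`.
Then `⟪φ j, ψ k⟫ = δ_{jk}` for all `j, k ≥ 1`. -/
theorem stmt11 {H : Type*} [NormedAddCommGroup H] [InnerProductSpace ℂ H]
    [CompleteSpace H] (e : ℕ → H) (he : Orthonormal ℂ e)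
    (a b : ℕ → ℂ) (ha1 : a 1 = 1) (ha2 : Summable fun m : ℕ => ‖a (m + 1)‖ ^ 2)
    (hb1 : b 1 = 1)
    (hbinv : ∀ n : ℕ, 1 < n → (∑ d ∈ n.divisors, b d * a (n / d)) = 0)
    (φ ψ : ℕ → H)
    (hφ : ∀ j : ℕ, 1 ≤ j → φ j = ∑' m : ℕ, a (m + 1) • e ((m + 1) * j))
    (hψ : ∀ k : ℕ, 1 ≤ k →
      ψ k = ∑ d ∈ k.divisors, (starRingEnd ℂ) (b (k / d)) • e d)
    (j k : ℕ) (hj : 1 ≤ j) (hk : 1 ≤ k) :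
    (inner ℂ (φ j) (ψ k) : ℂ) = if j = k then 1 else 0 := by
  classical
  have hk0 : k ≠ 0 := by omega
  have hj0 : 0 < j := hj
  have he' : ∀ i i' : ℕ, (inner ℂ (e i) (e i') : ℂ) = if i = i' then 1 else 0 :=
    orthonormal_iff_ite.mp he
  -- summability of the dilate series
  have hinj : Function.Injective (fun m : ℕ => (m + 1) * j) := by
    intro x y hxy
    simp only at hxy
    have := Nat.eq_of_mul_eq_mul_right hj0 hxy
    omega
  have hv : Orthonormal ℂ (fun m : ℕ => e ((m + 1) * j)) := he.comp _ hinj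
  have hsummable : Summable (fun m : ℕ => a (m + 1) • e ((m + 1) * j)) := by
    have := (hv.orthogonalFamily.summable_iff_norm_sq_summable
      (fun m => a (m + 1))).mpr ha2
    simpa [LinearIsometry.toSpanSingleton_apply] using this
  have hsum : HasSum (fun m : ℕ => a (m + 1) • e ((m + 1) * j)) (φ j) := by
    rw [hφ j hj]; exact hsummable.hasSum
  -- inner products with basis vectors
  have hinner_e : ∀ n : ℕ, (inner ℂ (ψ k) (e n) : ℂ) =
      if n ∈ k.divisors then b (k / n) else 0 := by
    intro n
    rw [hψ k hk, sum_inner]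
    simp only [inner_smul_left, he', starRingEnd_self_apply, mul_ite, mul_one, mul_zero]
    exact Finset.sum_ite_eq' k.divisors n (fun d => b (k / d))
  -- compute ⟪ψ k, φ j⟫ as a tsum
  have hsum2 : HasSum
      (fun m : ℕ => a (m + 1) *
        (if (m + 1) * j ∈ k.divisors then b (k / ((m + 1) * j)) else 0))
      (inner ℂ (ψ k) (φ j) : ℂ) := by
    have := hsum.mapL (innerSL ℂ (ψ k))
    simp only [innerSL_apply_apply, inner_smul_right] at this
    simpa only [hinner_e] using this
  have htsum : (inner ℂ (ψ k) (φ j) : ℂ) =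
      ∑ m ∈ Finset.range k, a (m + 1) *
        (if (m + 1) * j ∈ k.divisors then b (k / ((m + 1) * j)) else 0) := by
    refine hsum2.unique (hasSum_sum_of_ne_finset_zero ?_)
    intro m hm
    simp only [Finset.mem_range, not_lt] at hm
    have : (m + 1) * j ∉ k.divisors := by
      intro hdvd
      rw [Nat.mem_divisors] at hdvd
      have := Nat.le_of_dvd (Nat.pos_of_ne_zero hk0) hdvd.1
      nlinarith [hj0]
    simp [this]
  have key : (inner ℂ (ψ k) (φ j) : ℂ) = if j = k then 1 else 0 := by
    rw [htsum]
    by_cases hjk : j = k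
    · subst hjk
      rw [if_pos rfl]
      rw [Finset.sum_eq_single 0]
      · simp [Nat.mem_divisors, hk0, Nat.div_self (Nat.pos_of_ne_zero hk0), ha1, hb1]
      · intro m _ hm0
        have : (m + 1) * j ∉ j.divisors := by
          intro hdvd
          rw [Nat.mem_divisors] at hdvd
          have := Nat.le_of_dvd hj0 hdvd.1
          nlinarith [hj0, Nat.pos_of_ne_zero hm0]
        simp [this]
      · intro h
        exact absurd (Finset.mem_range.mpr hj0) h
    · rw [if_neg hjk]
      by_cases hdvd : j ∣ k
      · -- j ∣ k, j ≠ k : reduce to the Dirichlet inverse relation for n = k / j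
        obtain ⟨n, hn⟩ := hdvd
        have hn0 : n ≠ 0 := by rintro rfl; simp at hn; omega
        have hn1 : 1 < n := by
          rcases Nat.lt_or_ge n 2 with h | h
          · interval_cases n
            · omega
            · simp at hn; omega
          · omega
        have hstep : ∀ m ∈ Finset.range k,
            a (m + 1) * (if (m + 1) * j ∈ k.divisors then b (k / ((m + 1) * j)) else 0)
            = if (m + 1) ∈ n.divisors then a (m + 1) * b (n / (m + 1)) else 0 := by
          intro m _
          have hiff : (m + 1) * j ∈ k.divisors ↔ (m + 1) ∈ n.divisors := by
            simp only [Nat.mem_divisors, hk0, hn0, ne_eq, not_false_eq_true, and_true]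
            constructor
            · rintro ⟨c, hc⟩
              refine ⟨c, ?_⟩
              have : j * n = (m + 1) * j * c := by rw [← hn, hc]
              have : n * j = (m + 1) * c * j := by ring_nf; ring_nf at this; linarith [this]
              exact Nat.eq_of_mul_eq_mul_right hj0 this
            · rintro ⟨c, hc⟩
              exact ⟨c, by rw [hn, hc]; ring⟩
          have hdiv : k / ((m + 1) * j) = n / (m + 1) := by
            rw [hn, mul_comm j n, Nat.mul_div_mul_right _ _ hj0]
          rw [hdiv]
          by_cases h : (m + 1) * j ∈ k.divisors
          · rw [if_pos h, if_pos (hiff.mp h)]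
          · rw [if_neg h, if_neg (fun hc => h (hiff.mpr hc)), mul_zero]
        rw [Finset.sum_congr rfl hstep, ← Finset.sum_filter]
        have hbij : ∑ m ∈ (Finset.range k).filter (fun m => (m + 1) ∈ n.divisors),
            a (m + 1) * b (n / (m + 1)) = ∑ t ∈ n.divisors, a t * b (n / t) := by
          refine Finset.sum_nbij' (fun m => m + 1) (fun t => t - 1) ?_ ?_ ?_ ?_ ?_
          · intro m hm
            exact (Finset.mem_filter.mp hm).2
          · intro t ht
            have ht1 : 1 ≤ t := (Nat.one_le_iff_ne_zero.mpr
              (Nat.pos_of_mem_divisors ht).ne')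
            have htk : t ≤ k := by
              have := Nat.le_of_dvd (Nat.pos_of_ne_zero hn0) (Nat.dvd_of_mem_divisors ht)
              have : n ≤ k := Nat.le_of_dvd (Nat.pos_of_ne_zero hk0) ⟨j, by rw [hn]; ring⟩
              omega
            refine Finset.mem_filter.mpr ⟨Finset.mem_range.mpr (by omega), ?_⟩
            rwa [Nat.sub_add_cancel ht1]
          · intro m _; omega
          · intro t ht
            have ht1 : 1 ≤ t := Nat.one_le_iff_ne_zero.mpr
              (Nat.pos_of_mem_divisors ht).ne'
            omega
          · intro m _; rfl
        rw [hbij]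
        have := hbinv n hn1
        rw [← Nat.sum_div_divisors n (fun t => a t * b (n / t))]
        calc ∑ d ∈ n.divisors, a (n / d) * b (n / (n / d))
            = ∑ d ∈ n.divisors, b d * a (n / d) := by
              refine Finset.sum_congr rfl fun d hd => ?_
              rw [Nat.div_div_self (Nat.dvd_of_mem_divisors hd) hn0, mul_comm]
          _ = 0 := this
      · -- j ∤ k : every term vanishes
        refine Finset.sum_eq_zero fun m _ => ?_
        have : (m + 1) * j ∉ k.divisors := by
          intro hmem
          exact hdvd (dvd_trans (Dvd.intro_left _ rfl) (Nat.dvd_of_mem_divisors hmem))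
        simp [this]
  calc (inner ℂ (φ j) (ψ k) : ℂ) = (starRingEnd ℂ) (inner ℂ (ψ k) (φ j)) :=
        (inner_conj_symm _ _).symm
    _ = if j = k then 1 else 0 := by rw [key]; split <;> simp
end

section
/- There exists a square-summable sequence $(a_n)$ of real numbers, not identically zero, such that the function $f(\sigma) = \sum_{n=1}^\infty a_n n^{-\sigma}$ (defined for real $\sigma > 1/2$) has infinitely many zeros in $(1/2, \infty)$ accumulating at $\sigma = 1/2$. -/
open Filter Finset

lemma zsum (s : ℝ) (hs : 1 < s) : Summable (fun n : ℕ => ((n:ℝ)+1) ^ (-s)) := by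
  have h := Real.summable_nat_rpow (p := (-s)).2 (by linarith)
  have := (summable_nat_add_iff (f := fun n : ℕ => ((n:ℝ)) ^ (-s)) 1).2 h
  simpa [Nat.cast_add] using this

lemma step_ex (P : ℕ) (τ C ε : ℝ) (hτ : 1/2 < τ) (hC : 0 ≤ C) (hε0 : 0 < ε) (hε1 : ε ≤ 1) :
    ∃ cMt : ℝ × ℕ × ℝ,
      0 < cMt.1 ∧ cMt.1 ≤ 1 ∧ P < cMt.2.1 ∧
      1/2 < cMt.2.2 ∧ cMt.2.2 < τ ∧ cMt.2.2 < 1/2 + ε ∧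
      C + 2 < (∑ n ∈ Finset.Ico P cMt.2.1, cMt.1 * ((n:ℝ)+1) ^ (-(1/2:ℝ) - cMt.2.2)) ∧
      (∑ n ∈ Finset.Ico P cMt.2.1, (cMt.1 * ((n:ℝ)+1) ^ (-(1/2:ℝ)))^2) ≤ ε ∧
      (∑ n ∈ Finset.Ico P cMt.2.1, cMt.1 * ((n:ℝ)+1) ^ (-(1/2:ℝ) - τ)) ≤ ε := by
  classical
  have hbase : ∀ n : ℕ, (1:ℝ) ≤ (n:ℝ)+1 := fun n => by have := Nat.cast_nonneg (α := ℝ) n; linarith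
  have hZs : Summable (fun n : ℕ => ((n:ℝ)+1) ^ (-(1/2:ℝ) - τ)) := by
    have : -(1/2:ℝ) - τ = -(1/2 + τ) := by ring
    rw [this]; exact zsum _ (by linarith)
  set Z := ∑' n : ℕ, ((n:ℝ)+1) ^ (-(1/2:ℝ) - τ) with hZ
  have hZ0 : 0 ≤ Z := tsum_nonneg (fun n => Real.rpow_nonneg (by positivity) _)
  set c : ℝ := min 1 (min (ε/(Z+1)) (ε/(C+4))) with hc
  have hc0 : 0 < c := by
    apply lt_min (by norm_num) (lt_min (by positivity) (by positivity))
  have hc1 : c ≤ 1 := min_le_left _ _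
  -- choose M minimal with big harmonic block sum
  have harm : Tendsto (fun M => ∑ n ∈ Finset.range M, c * ((n:ℝ)+1)⁻¹) atTop atTop := by
    have h1 := Real.tendsto_sum_range_one_div_nat_succ_atTop
    have := h1.const_mul_atTop hc0
    simpa [Finset.mul_sum, one_div] using this
  have hex : ∃ M, C + 3 + (∑ n ∈ Finset.range P, c * ((n:ℝ)+1)⁻¹) < ∑ n ∈ Finset.range M, c * ((n:ℝ)+1)⁻¹ :=
    (harm.eventually_gt_atTop _).exists
  have hex' : ∃ M, C + 3 < ∑ n ∈ Finset.Ico P M, c * ((n:ℝ)+1)⁻¹ := by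
    obtain ⟨M, hM⟩ := hex
    have hPM : P ≤ M := by
      by_contra h
      push_neg at h
      have : (∑ n ∈ Finset.range M, c * ((n:ℝ)+1)⁻¹) ≤ ∑ n ∈ Finset.range P, c * ((n:ℝ)+1)⁻¹ :=
        Finset.sum_le_sum_of_subset_of_nonneg (Finset.range_subset_range.2 h.le) (fun i _ _ => by positivity)
      linarith
    refine ⟨M, ?_⟩
    have := Finset.sum_range_add_sum_Ico (fun n => c * ((n:ℝ)+1)⁻¹) hPM
    linarith
  set Q : ℕ → Prop := fun M => C + 3 < ∑ n ∈ Finset.Ico P M, c * ((n:ℝ)+1)⁻¹ with hQdef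
  set M := Nat.find hex' with hMdef
  have hQM : C + 3 < ∑ n ∈ Finset.Ico P M, c * ((n:ℝ)+1)⁻¹ := Nat.find_spec hex'
  have hPltM : P < M := by
    by_contra h
    push_neg at h
    rw [Finset.Ico_eq_empty (by omega)] at hQM
    simp at hQM; linarith
  have hup : (∑ n ∈ Finset.Ico P M, c * ((n:ℝ)+1)⁻¹) ≤ C + 4 := by
    obtain ⟨M', hM'⟩ : ∃ M', M = M' + 1 := ⟨M - 1, by omega⟩
    rw [hM']
    by_cases hPM' : P < M'
    · have hnot : ¬ (C + 3 < ∑ n ∈ Finset.Ico P M', c * ((n:ℝ)+1)⁻¹) :=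
        Nat.find_min hex' (by omega)
      push_neg at hnot
      have : (∑ n ∈ Finset.Ico P (M'+1), c * ((n:ℝ)+1)⁻¹)
          = (∑ n ∈ Finset.Ico P M', c * ((n:ℝ)+1)⁻¹) + c * ((M':ℝ)+1)⁻¹ :=
        Finset.sum_Ico_succ_top hPM'.le _
      have hsm : c * ((M':ℝ)+1)⁻¹ ≤ 1 := by
        have h1 : ((M':ℝ)+1)⁻¹ ≤ 1 := by
          rw [inv_le_one_iff₀]; right; exact hbase M'
        calc c * ((M':ℝ)+1)⁻¹ ≤ 1 * 1 := by
              apply mul_le_mul hc1 h1 (by positivity) (by norm_num)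
          _ = 1 := by norm_num
      linarith
    · have hPM : P = M' := by omega
      subst hPM
      rw [show Finset.Ico P (P+1) = {P} by simp, Finset.sum_singleton]
      have h1 : ((P:ℝ)+1)⁻¹ ≤ 1 := by
        rw [inv_le_one_iff₀]; right; exact hbase P
      nlinarith
  -- continuity in the exponent
  set g : ℝ → ℝ := fun s => ∑ n ∈ Finset.Ico P M, c * ((n:ℝ)+1) ^ (-(1/2:ℝ) - s) with hg
  have hgc : Continuous g := by
    apply continuous_finset_sum
    intro n _
    apply continuous_const.mul
    have hx : ((n:ℝ)+1) ≠ 0 := by positivity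
    have h1 : Continuous fun s : ℝ => ((n:ℝ)+1) ^ s :=
      continuous_iff_continuousAt.2 fun b => Real.continuousAt_const_rpow hx
    exact h1.comp (continuous_const.sub continuous_id)
  have hg12 : C + 3 < g (1/2) := by
    rw [hg]
    have : ∀ n : ℕ, ((n:ℝ)+1) ^ (-(1/2:ℝ) - 1/2) = ((n:ℝ)+1)⁻¹ := by
      intro n
      rw [show (-(1/2:ℝ) - 1/2) = -1 by norm_num, Real.rpow_neg_one]
    simp only [this]
    exact hQM
  -- pick t
  have hev1 : ∀ᶠ s in nhdsWithin (1/2:ℝ) (Set.Ioi (1/2:ℝ)), C + 2 < g s := by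
    apply Filter.Eventually.filter_mono nhdsWithin_le_nhds
    exact (hgc.continuousAt (x := (1/2:ℝ))).eventually (eventually_gt_nhds (by linarith))
  have hev2 : ∀ᶠ s in nhdsWithin (1/2:ℝ) (Set.Ioi (1/2:ℝ)), s < min τ (1/2 + ε) := by
    apply Filter.Eventually.filter_mono nhdsWithin_le_nhds
    exact eventually_lt_nhds (lt_min hτ (by linarith))
  have hev3 : ∀ᶠ s in nhdsWithin (1/2:ℝ) (Set.Ioi (1/2:ℝ)), (1/2:ℝ) < s :=
    eventually_mem_nhdsWithin
  obtain ⟨t, ⟨ht1, ht2⟩, ht3⟩ := ((hev1.and hev2).and hev3).exists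
  refine ⟨(c, M, t), hc0, hc1, hPltM, ht3, (lt_min_iff.1 ht2).1, (lt_min_iff.1 ht2).2, ht1, ?_, ?_⟩
  · -- ℓ² bound
    have hrw : ∀ n : ℕ, (c * ((n:ℝ)+1) ^ (-(1/2:ℝ)))^2 = c * (c * ((n:ℝ)+1)⁻¹) := by
      intro n
      have hx : (0:ℝ) < (n:ℝ)+1 := by positivity
      have : ((n:ℝ)+1) ^ (-(1/2:ℝ)) * ((n:ℝ)+1) ^ (-(1/2:ℝ)) = ((n:ℝ)+1)⁻¹ := by
        rw [← Real.rpow_add hx, show (-(1/2:ℝ) + -(1/2:ℝ)) = -1 by norm_num, Real.rpow_neg_one]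
      calc (c * ((n:ℝ)+1) ^ (-(1/2:ℝ)))^2
          = c * (c * (((n:ℝ)+1) ^ (-(1/2:ℝ)) * ((n:ℝ)+1) ^ (-(1/2:ℝ)))) := by ring
        _ = c * (c * ((n:ℝ)+1)⁻¹) := by rw [this]
    calc (∑ n ∈ Finset.Ico P M, (c * ((n:ℝ)+1) ^ (-(1/2:ℝ)))^2)
        = c * ∑ n ∈ Finset.Ico P M, c * ((n:ℝ)+1)⁻¹ := by
          rw [Finset.mul_sum]; exact Finset.sum_congr rfl fun n _ => hrw n
      _ ≤ c * (C + 4) := by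
          apply mul_le_mul_of_nonneg_left hup hc0.le
      _ ≤ (ε / (C+4)) * (C+4) := by
          apply mul_le_mul_of_nonneg_right _ (by linarith)
          exact le_trans (min_le_right _ _) (min_le_right _ _)
      _ = ε := by field_simp
  · -- small at τ
    have hsum : (∑ n ∈ Finset.Ico P M, ((n:ℝ)+1) ^ (-(1/2:ℝ) - τ)) ≤ Z := by
      exact Summable.sum_le_tsum _ (fun n _ => Real.rpow_nonneg (by positivity) _) hZs
    have hcz : c * (Z + 1) ≤ ε := by
      have hc2 : c ≤ ε / (Z+1) := le_trans (min_le_right _ _) (min_le_left _ _)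
      rw [div_eq_mul_inv] at hc2
      have hz1 : (0:ℝ) < Z + 1 := by linarith
      calc c * (Z+1) ≤ (ε * (Z+1)⁻¹) * (Z+1) := mul_le_mul_of_nonneg_right hc2 hz1.le
        _ = ε := by field_simp
    calc (∑ n ∈ Finset.Ico P M, c * ((n:ℝ)+1) ^ (-(1/2:ℝ) - τ))
        = c * ∑ n ∈ Finset.Ico P M, ((n:ℝ)+1) ^ (-(1/2:ℝ) - τ) := by rw [Finset.mul_sum]
      _ ≤ c * Z := mul_le_mul_of_nonneg_left hsum hc0.le
      _ ≤ ε := by nlinarith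
noncomputable def stepFn (P : ℕ) (τ C ε : ℝ) : ℝ × ℕ × ℝ :=
  if h : 1/2 < τ ∧ 0 ≤ C ∧ 0 < ε ∧ ε ≤ 1 then
    (step_ex P τ C ε h.1 h.2.1 h.2.2.1 h.2.2.2).choose
  else (1, P+1, 3/4)

lemma stepFn_spec (P : ℕ) (τ C ε : ℝ) (h1 : 1/2 < τ) (h2 : 0 ≤ C) (h3 : 0 < ε) (h4 : ε ≤ 1) :
    0 < (stepFn P τ C ε).1 ∧ (stepFn P τ C ε).1 ≤ 1 ∧ P < (stepFn P τ C ε).2.1 ∧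
      1/2 < (stepFn P τ C ε).2.2 ∧ (stepFn P τ C ε).2.2 < τ ∧ (stepFn P τ C ε).2.2 < 1/2 + ε ∧
      C + 2 < (∑ n ∈ Finset.Ico P (stepFn P τ C ε).2.1,
          (stepFn P τ C ε).1 * ((n:ℝ)+1) ^ (-(1/2:ℝ) - (stepFn P τ C ε).2.2)) ∧
      (∑ n ∈ Finset.Ico P (stepFn P τ C ε).2.1,
          ((stepFn P τ C ε).1 * ((n:ℝ)+1) ^ (-(1/2:ℝ)))^2) ≤ ε ∧
      (∑ n ∈ Finset.Ico P (stepFn P τ C ε).2.1,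
          (stepFn P τ C ε).1 * ((n:ℝ)+1) ^ (-(1/2:ℝ) - τ)) ≤ ε := by
  rw [stepFn, dif_pos (⟨h1, h2, h3, h4⟩ : 1/2 < τ ∧ 0 ≤ C ∧ 0 < ε ∧ ε ≤ 1)]
  exact (step_ex P τ C ε h1 h2 h3 h4).choose_spec

noncomputable def St : ℕ → ℕ × ℝ × ℝ
  | 0 => (0, 1, 0)
  | k+1 =>
    let s := St k
    let o := stepFn s.1 s.2.1 s.2.2 ((1/2)^k)
    (o.2.1, o.2.2, s.2.2 + o.1 * ((o.2.1 : ℝ) - (s.1 : ℝ)))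

noncomputable def Pk (k : ℕ) : ℕ := (St k).1
noncomputable def τk (k : ℕ) : ℝ := (St k).2.1
noncomputable def Ck (k : ℕ) : ℝ := (St k).2.2
noncomputable def ck (k : ℕ) : ℝ := (stepFn (Pk k) (τk k) (Ck k) ((1/2)^k)).1
noncomputable def tk (k : ℕ) : ℝ := (stepFn (Pk k) (τk k) (Ck k) ((1/2)^k)).2.2

lemma St_succ (k : ℕ) : St (k+1) =
    ((stepFn (Pk k) (τk k) (Ck k) ((1/2)^k)).2.1,
     (stepFn (Pk k) (τk k) (Ck k) ((1/2)^k)).2.2,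
     Ck k + ck k * (((stepFn (Pk k) (τk k) (Ck k) ((1/2)^k)).2.1 : ℝ) - (Pk k : ℝ))) := rfl

lemma Pk_succ (k : ℕ) : Pk (k+1) = (stepFn (Pk k) (τk k) (Ck k) ((1/2)^k)).2.1 := rfl
lemma τk_succ (k : ℕ) : τk (k+1) = tk k := rfl
lemma Ck_succ (k : ℕ) : Ck (k+1) = Ck k + ck k * ((Pk (k+1) : ℝ) - (Pk k : ℝ)) := rfl

lemma inv (k : ℕ) : 1/2 < τk k ∧ 0 ≤ Ck k := by
  induction k with
  | zero => constructor <;> norm_num [τk, Ck, St]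
  | succ k ih =>
    have hε : (0:ℝ) < (1/2)^k := by positivity
    have hε1 : ((1:ℝ)/2)^k ≤ 1 := by
      apply pow_le_one₀ <;> norm_num
    obtain ⟨hc0, hc1, hPlt, ht, -, -, -, -, -⟩ :=
      stepFn_spec (Pk k) (τk k) (Ck k) ((1/2)^k) ih.1 ih.2 hε hε1
    refine ⟨ht, ?_⟩
    rw [Ck_succ]
    have hle : (Pk k : ℝ) ≤ (Pk (k+1) : ℝ) := by exact_mod_cast (Nat.le_of_lt hPlt)
    have hc0' : 0 < ck k := hc0
    nlinarith [ih.2]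

lemma spec (k : ℕ) :
    0 < ck k ∧ ck k ≤ 1 ∧ Pk k < Pk (k+1) ∧
      1/2 < tk k ∧ tk k < τk k ∧ tk k < 1/2 + (1/2)^k ∧
      Ck k + 2 < (∑ n ∈ Finset.Ico (Pk k) (Pk (k+1)), ck k * ((n:ℝ)+1) ^ (-(1/2:ℝ) - tk k)) ∧
      (∑ n ∈ Finset.Ico (Pk k) (Pk (k+1)), (ck k * ((n:ℝ)+1) ^ (-(1/2:ℝ)))^2) ≤ (1/2)^k ∧
      (∑ n ∈ Finset.Ico (Pk k) (Pk (k+1)), ck k * ((n:ℝ)+1) ^ (-(1/2:ℝ) - τk k)) ≤ (1/2)^k := by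
  have hε : (0:ℝ) < (1/2)^k := by positivity
  have hε1 : ((1:ℝ)/2)^k ≤ 1 := by apply pow_le_one₀ <;> norm_num
  exact stepFn_spec (Pk k) (τk k) (Ck k) ((1/2)^k) (inv k).1 (inv k).2 hε hε1

lemma Pk_zero : Pk 0 = 0 := rfl

lemma Pk_mono : StrictMono Pk :=
  strictMono_nat_of_lt_succ fun k => (spec k).2.2.1

lemma Pk_ge (k : ℕ) : k ≤ Pk k := by
  induction k with
  | zero => exact Nat.zero_le _
  | succ k ih => exact Nat.succ_le_of_lt (lt_of_le_of_lt ih (Pk_mono (Nat.lt_succ_self k)))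

lemma tk_pos (k : ℕ) : 1/2 < tk k := (spec k).2.2.2.1

lemma τk_anti : StrictAnti τk := by
  apply strictAnti_nat_of_succ_lt
  intro k
  rw [τk_succ]
  exact (spec k).2.2.2.2.1

lemma tk_anti : StrictAnti tk := fun a b h => by
  have := τk_anti (Nat.succ_lt_succ h)
  rw [τk_succ, τk_succ] at this
  exact this

lemma tk_le (k : ℕ) : tk k < 1/2 + (1/2)^k := (spec k).2.2.2.2.2.1

noncomputable def blk (n : ℕ) : ℕ := Nat.findGreatest (fun k => Pk k ≤ n) n

lemma blk_le (n : ℕ) : Pk (blk n) ≤ n := by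
  rw [blk]
  exact Nat.findGreatest_spec (P := fun k => Pk k ≤ n) (m := 0) (Nat.zero_le n) (by simp [Pk_zero])

lemma blk_lt (n : ℕ) : n < Pk (blk n + 1) := by
  by_contra h
  push_neg at h
  have h1 : blk n + 1 ≤ n := le_trans (Pk_ge _) h
  have h2 := Nat.le_findGreatest (P := fun k => Pk k ≤ n) h1 h
  rw [← blk] at h2
  omega

lemma blk_eq {k n : ℕ} (h1 : Pk k ≤ n) (h2 : n < Pk (k+1)) : blk n = k := by
  rcases lt_trichotomy (blk n) k with h | h | h
  · have : Pk (blk n + 1) ≤ Pk k := Pk_mono.monotone h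
    have := blk_lt n
    omega
  · exact h
  · have : Pk (k+1) ≤ Pk (blk n) := Pk_mono.monotone h
    have := blk_le n
    omega

noncomputable def d (n : ℕ) : ℝ := (-1)^(blk n) * (ck (blk n) * ((n:ℝ)+1) ^ (-(1/2:ℝ)))

lemma d_abs (n : ℕ) : |d n| = ck (blk n) * ((n:ℝ)+1) ^ (-(1/2:ℝ)) := by
  rw [d, abs_mul, abs_pow, abs_neg, abs_one, one_pow, one_mul, abs_mul]
  rw [abs_of_pos (spec (blk n)).1, abs_of_nonneg (Real.rpow_nonneg (by positivity) _)]

lemma term_eq (n : ℕ) (σ : ℝ) :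
    d n * ((n:ℝ)+1) ^ (-σ) = (-1)^(blk n) * (ck (blk n) * ((n:ℝ)+1) ^ (-(1/2:ℝ) - σ)) := by
  rw [d, show (-(1/2:ℝ) - σ) = -(1/2:ℝ) + -σ by ring,
    Real.rpow_add (show (0:ℝ) < (n:ℝ)+1 by positivity)]
  ring

lemma term_abs (n : ℕ) (σ : ℝ) :
    |d n * ((n:ℝ)+1) ^ (-σ)| = ck (blk n) * ((n:ℝ)+1) ^ (-(1/2:ℝ) - σ) := by
  rw [term_eq, abs_mul, abs_pow, abs_neg, abs_one, one_pow, one_mul, abs_mul]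
  rw [abs_of_pos (spec (blk n)).1, abs_of_nonneg (Real.rpow_nonneg (by positivity) _)]

lemma term_abs_le (n : ℕ) (σ : ℝ) :
    |d n * ((n:ℝ)+1) ^ (-σ)| ≤ ((n:ℝ)+1) ^ (-(1/2:ℝ) - σ) := by
  rw [term_abs]
  have := Real.rpow_nonneg (show (0:ℝ) ≤ (n:ℝ)+1 by positivity) (-(1/2:ℝ) - σ)
  nlinarith [(spec (blk n)).1, (spec (blk n)).2.1]

lemma summable_f {σ : ℝ} (hσ : 1/2 < σ) :
    Summable (fun n : ℕ => d n * ((n:ℝ)+1) ^ (-σ)) := by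
  apply Summable.of_abs
  apply Summable.of_nonneg_of_le (fun n => abs_nonneg _) (fun n => term_abs_le n σ)
  have : ∀ n : ℕ, ((n:ℝ)+1) ^ (-(1/2:ℝ) - σ) = ((n:ℝ)+1) ^ (-(1/2 + σ)) := by
    intro n
    congr 1
    ring
  simp only [this]
  exact zsum _ (by linarith)

lemma blk_on_block {k n : ℕ} (h1 : Pk k ≤ n) (h2 : n < Pk (k+1)) :
    d n = (-1)^k * (ck k * ((n:ℝ)+1) ^ (-(1/2:ℝ))) := by
  rw [d, blk_eq h1 h2]

lemma head_bound (k : ℕ) (σ : ℝ) (hσ : 0 ≤ σ) :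
    |∑ n ∈ Finset.range (Pk k), d n * ((n:ℝ)+1) ^ (-σ)| ≤ Ck k := by
  induction k with
  | zero => simp [Pk_zero, Ck, St]
  | succ k ih =>
    rw [← Finset.sum_range_add_sum_Ico _ (Pk_mono (Nat.lt_succ_self k)).le, Ck_succ]
    have hblock : |∑ n ∈ Finset.Ico (Pk k) (Pk (k+1)), d n * ((n:ℝ)+1) ^ (-σ)|
        ≤ ck k * ((Pk (k+1) : ℝ) - (Pk k : ℝ)) := by
      calc |∑ n ∈ Finset.Ico (Pk k) (Pk (k+1)), d n * ((n:ℝ)+1) ^ (-σ)|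
          ≤ ∑ n ∈ Finset.Ico (Pk k) (Pk (k+1)), |d n * ((n:ℝ)+1) ^ (-σ)| :=
            Finset.abs_sum_le_sum_abs _ _
        _ ≤ ∑ n ∈ Finset.Ico (Pk k) (Pk (k+1)), ck k := by
            apply Finset.sum_le_sum
            intro n hn
            rw [Finset.mem_Ico] at hn
            rw [term_abs, blk_eq hn.1 hn.2]
            have hb : (1:ℝ) ≤ (n:ℝ)+1 := by
              have := Nat.cast_nonneg (α := ℝ) n; linarith
            have h1 : ((n:ℝ)+1) ^ (-(1/2:ℝ) - σ) ≤ 1 :=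
              Real.rpow_le_one_of_one_le_of_nonpos hb (by linarith)
            nlinarith [(spec k).1]
        _ = ck k * ((Pk (k+1) : ℝ) - (Pk k : ℝ)) := by
            rw [Finset.sum_const, Nat.card_Ico, nsmul_eq_mul, mul_comm,
              Nat.cast_sub (Pk_mono (Nat.lt_succ_self k)).le]
    calc |_ + _| ≤ _ := abs_add_le _ _
      _ ≤ Ck k + ck k * ((Pk (k+1) : ℝ) - (Pk k : ℝ)) := add_le_add ih hblock

lemma block_decomp (g : ℕ → ℝ) (k J : ℕ) (h : k ≤ J) :
    ∑ n ∈ Finset.Ico (Pk k) (Pk J), g n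
      = ∑ j ∈ Finset.Ico k J, ∑ n ∈ Finset.Ico (Pk j) (Pk (j+1)), g n := by
  induction J with
  | zero =>
    have : k = 0 := Nat.le_zero.1 h
    subst this
    simp
  | succ J ih =>
    rcases Nat.lt_or_ge k (J+1) with h' | h'
    · have hkJ : k ≤ J := Nat.lt_succ_iff.1 h'
      rw [Finset.sum_Ico_succ_top hkJ, ← ih hkJ,
        Finset.sum_Ico_consecutive _ (Pk_mono.monotone hkJ) (Pk_mono (Nat.lt_succ_self J)).le]
    · have : k = J + 1 := le_antisymm h h'
      subst this
      simp

lemma tail_block (m j : ℕ) (h : m < j) :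
    ∑ n ∈ Finset.Ico (Pk j) (Pk (j+1)), |d n * ((n:ℝ)+1) ^ (-(tk m))| ≤ (1/2)^j := by
  have hτ : τk j ≤ tk m := by
    rw [show tk m = τk (m+1) from (τk_succ m).symm]
    exact τk_anti.antitone (by omega)
  calc ∑ n ∈ Finset.Ico (Pk j) (Pk (j+1)), |d n * ((n:ℝ)+1) ^ (-(tk m))|
      ≤ ∑ n ∈ Finset.Ico (Pk j) (Pk (j+1)), ck j * ((n:ℝ)+1) ^ (-(1/2:ℝ) - τk j) := by
        apply Finset.sum_le_sum
        intro n hn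
        rw [Finset.mem_Ico] at hn
        rw [term_abs, blk_eq hn.1 hn.2]
        apply mul_le_mul_of_nonneg_left _ (spec j).1.le
        apply Real.rpow_le_rpow_of_exponent_le
        · have := Nat.cast_nonneg (α := ℝ) n; linarith
        · linarith
    _ ≤ (1/2)^j := (spec j).2.2.2.2.2.2.2.2

lemma tail_sum_le (m J : ℕ) :
    ∑ n ∈ Finset.Ico (Pk (m+1)) (Pk J), |d n * ((n:ℝ)+1) ^ (-(tk m))| ≤ 1 := by
  rcases Nat.lt_or_ge J (m+1) with h | h
  · rw [Finset.Ico_eq_empty]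
    · simp
    · exact fun hc => absurd (Pk_mono.lt_iff_lt.1 hc) (by omega)
  · rw [block_decomp _ _ _ h]
    calc ∑ j ∈ Finset.Ico (m+1) J, ∑ n ∈ Finset.Ico (Pk j) (Pk (j+1)), |d n * ((n:ℝ)+1) ^ (-(tk m))|
        ≤ ∑ j ∈ Finset.Ico (m+1) J, ((1:ℝ)/2)^j := by
          apply Finset.sum_le_sum
          intro j hj
          rw [Finset.mem_Ico] at hj
          exact tail_block m j hj.1
      _ = ∑ i ∈ Finset.range (J - (m+1)), ((1:ℝ)/2)^((m+1) + i) := by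
          rw [Finset.sum_Ico_eq_sum_range]
      _ ≤ 1 := by
          simp_rw [pow_add]
          rw [← Finset.mul_sum]
          have hg : ∑ i ∈ Finset.range (J - (m+1)), ((1:ℝ)/2)^i ≤ 2 := sum_geometric_two_le _
          have hp : ((1:ℝ)/2)^(m+1) ≤ 1/2 := by
            calc ((1:ℝ)/2)^(m+1) ≤ ((1:ℝ)/2)^1 :=
              pow_le_pow_of_le_one (by norm_num) (by norm_num) (by omega)
            _ = 1/2 := pow_one _
          have hp0 : (0:ℝ) ≤ ((1:ℝ)/2)^(m+1) := by positivity
          have hm1 : ((1:ℝ)/2)^m ≤ 1 := pow_le_one₀ (by norm_num) (by norm_num)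
          have hm0 : (0:ℝ) ≤ ((1:ℝ)/2)^m := by positivity
          have hS0 : (0:ℝ) ≤ ∑ i ∈ Finset.range (J - (m+1)), ((1:ℝ)/2)^i := by positivity
          nlinarith [mul_le_mul hm1 hg hS0 (by norm_num : (0:ℝ) ≤ 1)]

noncomputable def f (σ : ℝ) : ℝ := ∑' n : ℕ, d n * ((n:ℝ)+1) ^ (-σ)

lemma tail_abs_bound (m : ℕ) :
    ∑' n : ℕ, |d (n + Pk (m+1)) * (((n + Pk (m+1) : ℕ):ℝ)+1) ^ (-(tk m))| ≤ 1 := by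
  apply Real.tsum_le_of_sum_range_le (fun n => abs_nonneg _)
  intro N
  set P := Pk (m+1) with hP
  have h1 : ∑ i ∈ Finset.range N, |d (i + P) * (((i + P : ℕ):ℝ)+1) ^ (-(tk m))|
      = ∑ n ∈ Finset.Ico P (P + N), |d n * ((n:ℝ)+1) ^ (-(tk m))| := by
    rw [Finset.sum_Ico_eq_sum_range]
    simp only [Nat.add_sub_cancel_left]
    apply Finset.sum_congr rfl
    intro i _
    rw [Nat.add_comm P i]
  rw [h1]
  calc ∑ n ∈ Finset.Ico P (P + N), |d n * ((n:ℝ)+1) ^ (-(tk m))|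
      ≤ ∑ n ∈ Finset.Ico P (Pk (P + N)), |d n * ((n:ℝ)+1) ^ (-(tk m))| := by
        apply Finset.sum_le_sum_of_subset_of_nonneg
        · exact Finset.Ico_subset_Ico le_rfl (Pk_ge _)
        · intro n _ _
          exact abs_nonneg _
    _ ≤ 1 := tail_sum_le m (P + N)

lemma summable_f_abs {σ : ℝ} (hσ : 1/2 < σ) :
    Summable (fun n : ℕ => |d n * ((n:ℝ)+1) ^ (-σ)|) := (summable_f hσ).abs

set_option maxHeartbeats 1000000 in
lemma sign_f (k : ℕ) : 1 ≤ (-1:ℝ)^k * f (tk k) := by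
  have hσ : 1/2 < tk k := tk_pos k
  have hsum := summable_f hσ
  have hsplit := (Summable.sum_add_tsum_nat_add (f := fun n : ℕ => d n * ((n:ℝ)+1) ^ (-(tk k))) (Pk (k+1)) hsum)
  set H := ∑ n ∈ Finset.range (Pk k), d n * ((n:ℝ)+1) ^ (-(tk k)) with hH
  set T := ∑' n : ℕ, d (n + Pk (k+1)) * (((n + Pk (k+1) : ℕ):ℝ)+1) ^ (-(tk k)) with hT
  set B := ∑ n ∈ Finset.Ico (Pk k) (Pk (k+1)), ck k * ((n:ℝ)+1) ^ (-(1/2:ℝ) - tk k) with hB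
  have hfin : ∑ n ∈ Finset.range (Pk (k+1)), d n * ((n:ℝ)+1) ^ (-(tk k))
      = H + (-1:ℝ)^k * B := by
    rw [← Finset.sum_range_add_sum_Ico _ (Pk_mono (Nat.lt_succ_self k)).le, ← hH]
    congr 1
    rw [hB, Finset.mul_sum]
    apply Finset.sum_congr rfl
    intro n hn
    rw [Finset.mem_Ico] at hn
    rw [term_eq, blk_eq hn.1 hn.2]
  have hf : f (tk k) = H + (-1:ℝ)^k * B + T := by
    rw [f, ← hsplit, hfin]
  have hHb : |H| ≤ Ck k := head_bound k (tk k) (by linarith)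
  have hTb : |T| ≤ 1 := by
    calc |T| ≤ ∑' n : ℕ, |d (n + Pk (k+1)) * (((n + Pk (k+1) : ℕ):ℝ)+1) ^ (-(tk k))| := by
          rw [hT]
          have hs : Summable (fun n : ℕ => |d (n + Pk (k+1)) * (((n + Pk (k+1) : ℕ):ℝ)+1) ^ (-(tk k))|) := by
            apply Summable.comp_injective (summable_f_abs hσ) (add_left_injective _)
          have hnorm := norm_tsum_le_tsum_norm
            (f := fun n : ℕ => d (n + Pk (k+1)) * (((n + Pk (k+1) : ℕ):ℝ)+1) ^ (-(tk k)))
            (show Summable (fun n : ℕ => ‖d (n + Pk (k+1)) * (((n + Pk (k+1) : ℕ):ℝ)+1) ^ (-(tk k))‖) from hs)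
          exact hnorm
      _ ≤ 1 := tail_abs_bound k
  have hBb : Ck k + 2 < B := (spec k).2.2.2.2.2.2.1
  have hee : (-1:ℝ)^k * (-1:ℝ)^k = 1 := by
    rw [← pow_add]
    exact Even.neg_one_pow ⟨k, by ring⟩
  have h1 : (-1:ℝ)^k * H ≥ -|H| := by
    have : |(-1:ℝ)^k * H| = |H| := by
      rw [abs_mul, abs_pow, abs_neg, abs_one, one_pow, one_mul]
    linarith [neg_abs_le ((-1:ℝ)^k * H)]
  have h2 : (-1:ℝ)^k * T ≥ -|T| := by
    have : |(-1:ℝ)^k * T| = |T| := by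
      rw [abs_mul, abs_pow, abs_neg, abs_one, one_pow, one_mul]
    linarith [neg_abs_le ((-1:ℝ)^k * T)]
  have hef : (-1:ℝ)^k * f (tk k)
      = (-1:ℝ)^k * H + ((-1:ℝ)^k * (-1:ℝ)^k) * B + (-1:ℝ)^k * T := by
    rw [hf]; ring
  rw [hee, one_mul] at hef
  linarith

lemma cont_f {s : ℝ} (hs : 1/2 < s) : ContinuousOn f (Set.Ici s) := by
  apply continuousOn_tsum (u := fun n : ℕ => ((n:ℝ)+1) ^ (-(1/2:ℝ) - s))
  · intro n
    apply Continuous.continuousOn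
    apply continuous_const.mul
    have hx : ((n:ℝ)+1) ≠ 0 := by positivity
    have h1 : Continuous fun σ : ℝ => ((n:ℝ)+1) ^ σ :=
      continuous_iff_continuousAt.2 fun b => Real.continuousAt_const_rpow hx
    exact h1.comp continuous_neg
  · have : ∀ n : ℕ, ((n:ℝ)+1) ^ (-(1/2:ℝ) - s) = ((n:ℝ)+1) ^ (-(1/2 + s)) := by
      intro n; congr 1; ring
    simp only [this]
    exact zsum _ (by linarith)
  · intro n σ hσ
    rw [Real.norm_eq_abs, term_abs]
    calc ck (blk n) * ((n:ℝ)+1) ^ (-(1/2:ℝ) - σ) ≤ ((n:ℝ)+1) ^ (-(1/2:ℝ) - σ) := by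
          have := Real.rpow_nonneg (show (0:ℝ) ≤ (n:ℝ)+1 by positivity) (-(1/2:ℝ) - σ)
          nlinarith [(spec (blk n)).1, (spec (blk n)).2.1]
      _ ≤ ((n:ℝ)+1) ^ (-(1/2:ℝ) - s) := by
          apply Real.rpow_le_rpow_of_exponent_le
          · have := Nat.cast_nonneg (α := ℝ) n; linarith
          · have : s ≤ σ := hσ
            linarith

lemma exists_zero (k : ℕ) : ∃ x, x ∈ Set.Ioo (tk (k+1)) (tk k) ∧ f x = 0 := by
  have hlt : tk (k+1) < tk k := tk_anti (Nat.lt_succ_self k)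
  have hcont : ContinuousOn f (Set.Icc (tk (k+1)) (tk k)) :=
    (cont_f (tk_pos (k+1))).mono Set.Icc_subset_Ici_self
  have h1 := sign_f k
  have h2 := sign_f (k+1)
  rcases Nat.even_or_odd k with he | ho
  · rw [he.neg_one_pow, one_mul] at h1
    rw [(Even.add_one he).neg_one_pow, neg_one_mul] at h2
    have himg := intermediate_value_Ioo hlt.le hcont
      (show (0:ℝ) ∈ Set.Ioo (f (tk (k+1))) (f (tk k)) from ⟨by linarith, by linarith⟩)
    obtain ⟨x, hx, hfx⟩ := himg
    exact ⟨x, hx, hfx⟩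
  · rw [ho.neg_one_pow, neg_one_mul] at h1
    rw [(Odd.add_one ho).neg_one_pow, one_mul] at h2
    have himg := intermediate_value_Ioo' hlt.le hcont
      (show (0:ℝ) ∈ Set.Ioo (f (tk k)) (f (tk (k+1))) from ⟨by linarith, by linarith⟩)
    obtain ⟨x, hx, hfx⟩ := himg
    exact ⟨x, hx, hfx⟩

lemma l2_summable : Summable (fun n : ℕ => (d n)^2) := by
  apply summable_of_sum_range_le (c := 2) (fun n => sq_nonneg _)
  intro N
  calc ∑ n ∈ Finset.range N, (d n)^2
      ≤ ∑ n ∈ Finset.range (Pk N), (d n)^2 := by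
        apply Finset.sum_le_sum_of_subset_of_nonneg
          (Finset.range_subset_range.2 (Pk_ge N)) (fun n _ _ => sq_nonneg _)
    _ = ∑ n ∈ Finset.Ico (Pk 0) (Pk N), (d n)^2 := by
        rw [Pk_zero, ← Finset.range_eq_Ico]
    _ = ∑ j ∈ Finset.Ico 0 N, ∑ n ∈ Finset.Ico (Pk j) (Pk (j+1)), (d n)^2 :=
        block_decomp _ 0 N (Nat.zero_le N)
    _ ≤ ∑ j ∈ Finset.Ico 0 N, ((1:ℝ)/2)^j := by
        apply Finset.sum_le_sum
        intro j _
        have : ∀ n ∈ Finset.Ico (Pk j) (Pk (j+1)),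
            (d n)^2 = (ck j * ((n:ℝ)+1) ^ (-(1/2:ℝ)))^2 := by
          intro n hn
          rw [Finset.mem_Ico] at hn
          rw [blk_on_block hn.1 hn.2, mul_pow, ← pow_mul, mul_comm j 2, pow_mul,
            neg_one_sq, one_pow, one_mul]
        rw [Finset.sum_congr rfl this]
        exact (spec j).2.2.2.2.2.2.2.1
    _ ≤ 2 := by
        rw [← Finset.range_eq_Ico]
        exact sum_geometric_two_le N

noncomputable def zseq (k : ℕ) : ℝ := (exists_zero k).choose

lemma zseq_spec (k : ℕ) : zseq k ∈ Set.Ioo (tk (k+1)) (tk k) ∧ f (zseq k) = 0 :=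
  (exists_zero k).choose_spec

/-- There is a nonzero square-summable real sequence `(a n)` whose Dirichlet
series `f(σ) = ∑ a n · n^{-σ}` has infinitely many real zeros in `(1/2, ∞)`
accumulating at `σ = 1/2`. -/
theorem stmt15 :
    ∃ a : ℕ → ℝ, (Summable fun n : ℕ => (a (n + 1)) ^ 2) ∧ (∃ n : ℕ, a (n + 1) ≠ 0) ∧
      ∃ σ : ℕ → ℝ, StrictAnti σ ∧ (∀ k, 1 / 2 < σ k) ∧
        Tendsto σ atTop (nhds (1 / 2)) ∧
        ∀ k, (∑' n : ℕ, a (n + 1) * ((n + 1 : ℝ)) ^ (-(σ k))) = 0 := by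
  refine ⟨fun m => if m = 0 then 0 else d (m - 1), ?_, ?_, zseq, ?_, ?_, ?_, ?_⟩
  · simpa using l2_summable
  · refine ⟨0, ?_⟩
    simp only [Nat.add_eq, Nat.succ_ne_zero, if_false]
    have hblk0 : blk 0 = 0 := blk_eq (by rw [Pk_zero]) (by
      have h := Pk_mono (Nat.lt_succ_self 0)
      rw [Pk_zero] at h
      exact h)
    rw [show (0 + 1 - 1 : ℕ) = 0 from rfl, d, hblk0]
    simp only [pow_zero, one_mul, Nat.cast_zero, zero_add, Real.one_rpow, mul_one]
    exact (spec 0).1.ne'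
  · apply strictAnti_nat_of_succ_lt
    intro k
    have h1 := (zseq_spec (k+1)).1.2
    have h2 := (zseq_spec k).1.1
    linarith
  · intro k
    have := (zseq_spec k).1.1
    have := tk_pos (k+1)
    linarith
  · apply tendsto_of_tendsto_of_tendsto_of_le_of_le (g := fun _ : ℕ => (1/2 : ℝ))
      (h := fun k : ℕ => 1/2 + (1/2 : ℝ)^k) tendsto_const_nhds
    · have hp : Tendsto (fun k : ℕ => ((1:ℝ)/2)^k) atTop (nhds 0) :=
        tendsto_pow_atTop_nhds_zero_of_lt_one (by norm_num) (by norm_num)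
      have := tendsto_const_nhds (x := (1/2 : ℝ)) (f := atTop (α := ℕ)) |>.add hp
      simpa using this
    · intro k
      have := (zseq_spec k).1.1
      have := tk_pos (k+1)
      linarith
    · intro k
      have h1 := (zseq_spec k).1.2
      have h2 := tk_le k
      linarith
  · intro k
    have heq : (∑' n : ℕ, (fun m => if m = 0 then 0 else d (m - 1)) (n + 1) * ((n:ℝ) + 1) ^ (-(zseq k)))
        = f (zseq k) := by
      apply tsum_congr
      intro n
      simp only [Nat.succ_ne_zero, if_false, Nat.add_sub_cancel]
    rw [heq]
    exact (zseq_spec k).2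
end
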